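/- For unit vectors x, v, w in ℝ³ with x × v ≠ 0, ⟨(x × v)/‖x × v‖, v × w⟩ = cos θ · sin θ' · cos α − cos θ' · sin θ, where θ = angle(x, v), θ' = angle(x, w), α = angle(x × v, x × w), assuming x × w ≠ 0. -/

import Mathlib

/-!
Write `a = ⟪x, v⟫`, `b = ⟪x, w⟫`, `c = ⟪v, w⟫` and `s = ‖x × v‖ = sin θ`. By the Lagrange identity
the left side is `(a c - b) / s`, while `sin θ' cos α = ⟪x × v, x × w⟫ / s = (c - a b) / s`, so the
right side is `a (c - a b) / s - b s`; the two agree because `s² = 1 - a²`.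
-/

open InnerProductGeometry Real

noncomputable def cross3 (a b : EuclideanSpace ℝ (Fin 3)) : EuclideanSpace ℝ (Fin 3) :=
  (WithLp.equiv 2 (Fin 3 → ℝ)).symm
    (crossProduct ((WithLp.equiv 2 (Fin 3 → ℝ)) a) ((WithLp.equiv 2 (Fin 3 → ℝ)) b))

open scoped RealInnerProductSpace

theorem real_inner_cross3_cross3 (a b c d : EuclideanSpace ℝ (Fin 3)) :
    ⟪cross3 a b, cross3 c d⟫ = ⟪a, c⟫ * ⟪b, d⟫ - ⟪a, d⟫ * ⟪b, c⟫ := by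
  simp only [cross3, EuclideanSpace.inner_eq_star_dotProduct, star_trivial]
  simp [cross_dot_cross, dotProduct_comm]

theorem norm_cross3 (a b : EuclideanSpace ℝ (Fin 3)) :
    ‖cross3 a b‖ = sin (angle a b) * (‖a‖ * ‖b‖) := by
  rw [sin_angle_mul_norm_mul_norm, ← sqrt_sq (norm_nonneg _), ← real_inner_self_eq_norm_sq,
    real_inner_cross3_cross3, real_inner_comm b a]

/-- Also valid when `a` or `b` is zero, since then `angle a b = π / 2`. -/
theorem norm_mul_cos_angle {V : Type*} [NormedAddCommGroup V] [InnerProductSpace ℝ V]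
    (a b : V) : ‖b‖ * cos (angle a b) = ⟪a, b⟫ / ‖a‖ := by
  rcases eq_or_ne b 0 with rfl | hb
  · simp
  · rw [cos_angle]
    field_simp [norm_ne_zero_iff.mpr hb]

theorem stmt_13_general (x v w : EuclideanSpace ℝ (Fin 3))
    (hx : ‖x‖ = 1) (hv : ‖v‖ = 1) (hw : ‖w‖ = 1) :
    (inner ℝ ((‖cross3 x v‖)⁻¹ • cross3 x v) (cross3 v w) : ℝ) =
      Real.cos (angle x v) * Real.sin (angle x w) *
          Real.cos (angle (cross3 x v) (cross3 x w)) -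
        Real.cos (angle x w) * Real.sin (angle x v) := by
  have hself {u : EuclideanSpace ℝ (Fin 3)} (hu : ‖u‖ = 1) : ⟪u, u⟫ = 1 := by
    rw [real_inner_self_eq_norm_sq, hu, one_pow]
  have hcos {u : EuclideanSpace ℝ (Fin 3)} (hu : ‖u‖ = 1) : cos (angle x u) = ⟪x, u⟫ := by
    rw [cos_angle, hx, hu, mul_one, div_one]
  have hsin {u : EuclideanSpace ℝ (Fin 3)} (hu : ‖u‖ = 1) : sin (angle x u) = ‖cross3 x u‖ := by
    rw [norm_cross3, hx, hu, mul_one, mul_one]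
  have hs : ‖cross3 x v‖ ^ 2 = 1 - ⟪x, v⟫ ^ 2 := by
    rw [← real_inner_self_eq_norm_sq, real_inner_cross3_cross3, hself hx, hself hv,
      real_inner_comm x v]
    ring
  rw [real_inner_smul_left, real_inner_cross3_cross3, mul_assoc, hsin hw, norm_mul_cos_angle,
    real_inner_cross3_cross3, hcos hv, hcos hw, hsin hv, hself hx, hself hv, real_inner_comm x v]
  -- `s⁻¹ * s * s = s` holds also for `s = 0`, so no case split on `x × v = 0` is needed.
  linear_combination ⟪x, w⟫ * ‖cross3 x v‖⁻¹ * hs - ⟪x, w⟫ * inv_mul_mul_self ‖cross3 x v‖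

theorem stmt_13 (x v w : EuclideanSpace ℝ (Fin 3))
    (hx : ‖x‖ = 1) (hv : ‖v‖ = 1) (hw : ‖w‖ = 1)
    (hxv : cross3 x v ≠ 0) (hxw : cross3 x w ≠ 0) :
    (inner ℝ ((‖cross3 x v‖)⁻¹ • cross3 x v) (cross3 v w) : ℝ) =
      Real.cos (angle x v) * Real.sin (angle x w) *
          Real.cos (angle (cross3 x v) (cross3 x w)) -
        Real.cos (angle x w) * Real.sin (angle x v) :=
  stmt_13_general x v w hx hv hw
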